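/- arXiv:1506.08027 — 2 statements merged into one kernel-verified Lean document; each statement's English description precedes it below -/
import Mathlib

section
/- For u,v,w,z ∈ ℂ and p ≥ 2, the function f(u,v) := |v|^p |u|^{p-2} u satisfies |f(u,v) − f(w,z)| ≤ C · max(|v|^{p-1}|u|^{p-1} + |v|^p|u|^{p-2}, |z|^{p-1}|w|^{p-1} + |z|^p|w|^{p-2}) · (|u−w| + |v−z|) for some constant C depending only on p. -/
open Real

lemma L1 (r x y : ℝ) (hr : 1 ≤ r) (hy : 0 ≤ y) (hxy : y ≤ x) :
    x ^ r - y ^ r ≤ r * x ^ (r - 1) * (x - y) := by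
  rcases eq_or_lt_of_le (hy.trans hxy) with hx | hx
  · have hy0 : y = 0 := le_antisymm (hxy.trans hx.symm.le) hy
    subst hy0
    rw [← hx]
    simp [Real.zero_rpow (by linarith : r ≠ 0)]
  have hxr : (0:ℝ) < x ^ r := Real.rpow_pos_of_pos hx r
  have hs : (-1:ℝ) ≤ y / x - 1 := by
    have : 0 ≤ y / x := by positivity
    linarith
  have hb := one_add_mul_self_le_rpow_one_add hs hr
  have h1 : 1 + (y / x - 1) = y / x := by ring
  rw [h1] at hb
  have h2 := mul_le_mul_of_nonneg_left hb hxr.le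
  have h3 : x ^ r * (y / x) ^ r = y ^ r := by
    rw [← Real.mul_rpow hx.le (by positivity), mul_div_cancel₀ _ hx.ne']
  have hxr1 : x ^ (r - 1) * x = x ^ r := by
    rw [← Real.rpow_add_one hx.ne']; ring_nf
  have h2' : x ^ r + r * (x ^ (r - 1) * y) - r * x ^ r ≤ y ^ r := by
    calc x ^ r + r * (x ^ (r - 1) * y) - r * x ^ r
        = x ^ r * (1 + r * (y / x - 1)) := by
          have h5 : x ^ r * (y / x) = x ^ (r - 1) * y := by
            rw [← hxr1]; field_simp
          rw [← h5]; ring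
      _ ≤ x ^ r * (y / x) ^ r := h2
      _ = y ^ r := h3
  nlinarith [h2', hxr1]

-- concave-range helper: for 0 ≤ r ≤ 1, x^r * y ≤ y^r * x when 0 ≤ y ≤ x
lemma L2 (r x y : ℝ) (hr0 : 0 ≤ r) (hr : r ≤ 1) (hy : 0 ≤ y) (hxy : y ≤ x) :
    x ^ r * y ≤ y ^ r * x := by
  rcases eq_or_lt_of_le hy with hy0 | hy0
  · subst hy0
    have : (0:ℝ) ≤ 0 ^ r * x := by positivity
    simpa using this
  have hx : 0 < x := lt_of_lt_of_le hy0 hxy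
  have h1 : (1:ℝ) ≤ x / y := (one_le_div hy0).2 hxy
  have h2 : (x / y) ^ r ≤ (x / y) ^ (1:ℝ) :=
    Real.rpow_le_rpow_of_exponent_le h1 hr
  rw [Real.rpow_one] at h2
  rw [Real.div_rpow hx.le hy] at h2
  have hyr : 0 < y ^ r := Real.rpow_pos_of_pos hy0 r
  rw [div_le_div_iff₀ hyr hy0] at h2
  linarith

-- combined scalar bound: (x^r - y^r) * m ≤ (r+1) * x^r * (x-y) for 0 ≤ m ≤ x
lemma keyS (r x y m : ℝ) (hr : 0 ≤ r) (hy : 0 ≤ y) (hxy : y ≤ x) (hm : 0 ≤ m) (hmx : m ≤ x) :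
    (x ^ r - y ^ r) * m ≤ (r + 1) * x ^ r * (x - y) := by
  have hx : 0 ≤ x := hy.trans hxy
  have hnn : y ^ r ≤ x ^ r := Real.rpow_le_rpow hy hxy hr
  rcases le_total 1 r with h1 | h1
  · have hL := L1 r x y h1 hy hxy
    rcases eq_or_lt_of_le hx with hx0 | hx0
    · have hy0 : y = 0 := le_antisymm (hxy.trans hx0.symm.le) hy
      have hm0 : m = 0 := le_antisymm (hmx.trans hx0.symm.le) hm
      subst hy0; subst hm0
      simp only [mul_zero, sub_zero]
      exact mul_nonneg (mul_nonneg (by linarith) (Real.rpow_nonneg hx r)) hx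
    · have hxr1 : x ^ (r - 1) * x = x ^ r := by
        rw [← Real.rpow_add_one hx0.ne']; ring_nf
      calc (x ^ r - y ^ r) * m ≤ (r * x ^ (r - 1) * (x - y)) * m := by
            apply mul_le_mul_of_nonneg_right hL hm
        _ ≤ (r * x ^ (r - 1) * (x - y)) * x := by
            apply mul_le_mul_of_nonneg_left hmx
            have : 0 ≤ x ^ (r - 1) := Real.rpow_nonneg hx0.le _
            nlinarith
        _ = r * x ^ r * (x - y) := by rw [← hxr1]; ring
        _ ≤ (r + 1) * x ^ r * (x - y) := by
            have : 0 ≤ x ^ r := Real.rpow_nonneg hx _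
            nlinarith
  · have hL2 := L2 r x y hr h1 hy hxy
    calc (x ^ r - y ^ r) * m ≤ (x ^ r - y ^ r) * x :=
          mul_le_mul_of_nonneg_left hmx (by linarith)
      _ ≤ x ^ r * (x - y) := by nlinarith
      _ ≤ (r + 1) * x ^ r * (x - y) := by
          have h0 : 0 ≤ x ^ r := Real.rpow_nonneg hx _
          nlinarith [mul_nonneg (mul_nonneg hr h0) (sub_nonneg.2 hxy)]

-- |b^r - d^r| ≤ r * max b d ^ (r-1) * |b-d| for r ≥ 1
lemma keyP (r b d : ℝ) (hr : 1 ≤ r) (hb : 0 ≤ b) (hd : 0 ≤ d) :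
    |b ^ r - d ^ r| ≤ r * (max b d) ^ (r - 1) * |b - d| := by
  rcases le_total d b with h | h
  · rw [abs_of_nonneg (sub_nonneg.2 (Real.rpow_le_rpow hd h (by linarith))),
      abs_of_nonneg (sub_nonneg.2 h), max_eq_left h]
    exact L1 r b d hr hd h
  · rw [abs_sub_comm, abs_sub_comm b d,
      abs_of_nonneg (sub_nonneg.2 (Real.rpow_le_rpow hb h (by linarith))),
      abs_of_nonneg (sub_nonneg.2 h), max_eq_right h]
    exact L1 r d b hr hb h

lemma mono3 (k A A' B B' : ℝ) (hk : 0 ≤ k) (hA : A ≤ A') (hB : B ≤ B')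
    (hB0 : 0 ≤ B) (hA'0 : 0 ≤ A') : k * A * B ≤ k * A' * B' :=
  le_trans (mul_le_mul_of_nonneg_right (mul_le_mul_of_nonneg_left hA hk) hB0)
    (mul_le_mul_of_nonneg_left hB (mul_nonneg hk hA'0))

-- vector lemma
lemma keyV (s : ℝ) (hs : 0 ≤ s) (u w : ℂ) :
    ‖(‖u‖ ^ s : ℝ) • u - (‖w‖ ^ s : ℝ) • w‖ ≤ (s + 2) * (max ‖u‖ ‖w‖) ^ s * ‖u - w‖ := by
  have hM : 0 ≤ max ‖u‖ ‖w‖ := le_max_of_le_left (norm_nonneg u)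
  have hdec : (‖u‖ ^ s : ℝ) • u - (‖w‖ ^ s : ℝ) • w
      = (‖u‖ ^ s : ℝ) • (u - w) + ((‖u‖ ^ s - ‖w‖ ^ s : ℝ)) • w := by
    module
  rw [hdec]
  have h1 : ‖(‖u‖ ^ s : ℝ) • (u - w)‖ ≤ (max ‖u‖ ‖w‖) ^ s * ‖u - w‖ := by
    rw [norm_smul, Real.norm_eq_abs, abs_of_nonneg (Real.rpow_nonneg (norm_nonneg u) s)]
    apply mul_le_mul_of_nonneg_right _ (norm_nonneg _)
    exact Real.rpow_le_rpow (norm_nonneg u) (le_max_left _ _) hs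
  have h2 : ‖((‖u‖ ^ s - ‖w‖ ^ s : ℝ)) • w‖ ≤ (s + 1) * (max ‖u‖ ‖w‖) ^ s * ‖u - w‖ := by
    rw [norm_smul, Real.norm_eq_abs]
    rcases le_total ‖w‖ ‖u‖ with h | h
    · rw [abs_of_nonneg (sub_nonneg.2 (Real.rpow_le_rpow (norm_nonneg w) h hs))]
      calc (‖u‖ ^ s - ‖w‖ ^ s) * ‖w‖ ≤ (s + 1) * ‖u‖ ^ s * (‖u‖ - ‖w‖) :=
            keyS s ‖u‖ ‖w‖ ‖w‖ hs (norm_nonneg w) h (norm_nonneg w) h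
        _ ≤ (s + 1) * (max ‖u‖ ‖w‖) ^ s * ‖u - w‖ := by
            have e1 : ‖u‖ ^ s ≤ (max ‖u‖ ‖w‖) ^ s :=
              Real.rpow_le_rpow (norm_nonneg u) (le_max_left _ _) hs
            have e2 : ‖u‖ - ‖w‖ ≤ ‖u - w‖ := norm_sub_norm_le u w
            have e3 : (0:ℝ) ≤ ‖u‖ - ‖w‖ := by linarith
            exact mono3 _ _ _ _ _ (by linarith) e1 e2 e3 (Real.rpow_nonneg hM s)
    · rw [abs_of_nonpos (sub_nonpos.2 (Real.rpow_le_rpow (norm_nonneg u) h hs)), neg_sub]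
      calc (‖w‖ ^ s - ‖u‖ ^ s) * ‖w‖ ≤ (s + 1) * ‖w‖ ^ s * (‖w‖ - ‖u‖) :=
            keyS s ‖w‖ ‖u‖ ‖w‖ hs (norm_nonneg u) h (norm_nonneg w) le_rfl
        _ ≤ (s + 1) * (max ‖u‖ ‖w‖) ^ s * ‖u - w‖ := by
            have e1 : ‖w‖ ^ s ≤ (max ‖u‖ ‖w‖) ^ s :=
              Real.rpow_le_rpow (norm_nonneg w) (le_max_right _ _) hs
            have e2 : ‖w‖ - ‖u‖ ≤ ‖u - w‖ := by
              have := norm_sub_norm_le w u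
              rwa [norm_sub_rev] at this
            have e3 : (0:ℝ) ≤ ‖w‖ - ‖u‖ := by linarith
            exact mono3 _ _ _ _ _ (by linarith) e1 e2 e3 (Real.rpow_nonneg hM s)
  calc ‖(‖u‖ ^ s : ℝ) • (u - w) + ((‖u‖ ^ s - ‖w‖ ^ s : ℝ)) • w‖
      ≤ ‖(‖u‖ ^ s : ℝ) • (u - w)‖ + ‖((‖u‖ ^ s - ‖w‖ ^ s : ℝ)) • w‖ := norm_add_le _ _
    _ ≤ (max ‖u‖ ‖w‖) ^ s * ‖u - w‖ + (s + 1) * (max ‖u‖ ‖w‖) ^ s * ‖u - w‖ := by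
        exact add_le_add h1 h2
    _ = (s + 2) * (max ‖u‖ ‖w‖) ^ s * ‖u - w‖ := by ring

lemma rpow_mul_self (a s : ℝ) (ha : 0 ≤ a) (hs1 : 0 < s + 1) : a ^ s * a = a ^ (s + 1) := by
  rcases eq_or_lt_of_le ha with h0 | h0
  · rw [← h0]
    simp [Real.zero_rpow hs1.ne']
  · rw [Real.rpow_add_one h0.ne' s]

lemma main_aux (p : ℝ) (hp : 2 ≤ p) (u v w z : ℂ) (hdb : ‖z‖ ≤ ‖v‖) :
    ‖(‖v‖ ^ p * ‖u‖ ^ (p - 2) : ℝ) • u - (‖z‖ ^ p * ‖w‖ ^ (p - 2) : ℝ) • w‖ ≤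
      p * max (‖v‖ ^ (p - 1) * ‖u‖ ^ (p - 1) + ‖v‖ ^ p * ‖u‖ ^ (p - 2))
              (‖z‖ ^ (p - 1) * ‖w‖ ^ (p - 1) + ‖z‖ ^ p * ‖w‖ ^ (p - 2)) *
        (‖u - w‖ + ‖v - z‖) := by
  have ha : (0:ℝ) ≤ ‖u‖ := norm_nonneg u
  have hb : (0:ℝ) ≤ ‖v‖ := norm_nonneg v
  have hc : (0:ℝ) ≤ ‖w‖ := norm_nonneg w
  have hd : (0:ℝ) ≤ ‖z‖ := norm_nonneg z
  have hp0 : (0:ℝ) ≤ p := by linarith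
  set X := max (‖v‖ ^ (p - 1) * ‖u‖ ^ (p - 1) + ‖v‖ ^ p * ‖u‖ ^ (p - 2))
              (‖z‖ ^ (p - 1) * ‖w‖ ^ (p - 1) + ‖z‖ ^ p * ‖w‖ ^ (p - 2)) with hXdef
  have hdec : (‖v‖ ^ p * ‖u‖ ^ (p - 2) : ℝ) • u - (‖z‖ ^ p * ‖w‖ ^ (p - 2) : ℝ) • w
      = ((‖v‖ ^ p - ‖z‖ ^ p) * ‖u‖ ^ (p - 2) : ℝ) • u
        + (‖z‖ ^ p : ℝ) • ((‖u‖ ^ (p - 2) : ℝ) • u - (‖w‖ ^ (p - 2) : ℝ) • w) := by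
    module
  have haa : ‖u‖ ^ (p - 2) * ‖u‖ = ‖u‖ ^ (p - 1) := by
    rw [rpow_mul_self _ _ ha (by linarith), show p - 2 + 1 = p - 1 by ring]
  have T1 : ‖((‖v‖ ^ p - ‖z‖ ^ p) * ‖u‖ ^ (p - 2) : ℝ) • u‖ ≤ p * X * ‖v - z‖ := by
    rw [norm_smul, Real.norm_eq_abs, abs_mul, abs_of_nonneg (Real.rpow_nonneg ha _)]
    have hP : |‖v‖ ^ p - ‖z‖ ^ p| ≤ p * ‖v‖ ^ (p - 1) * ‖v - z‖ := by
      have hk := keyP p ‖v‖ ‖z‖ (by linarith) hb hd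
      rw [max_eq_left hdb] at hk
      refine hk.trans ?_
      exact mul_le_mul_of_nonneg_left (abs_norm_sub_norm_le v z)
        (by positivity)
    calc |‖v‖ ^ p - ‖z‖ ^ p| * ‖u‖ ^ (p - 2) * ‖u‖
        = |‖v‖ ^ p - ‖z‖ ^ p| * ‖u‖ ^ (p - 1) := by rw [mul_assoc, haa]
      _ ≤ (p * ‖v‖ ^ (p - 1) * ‖v - z‖) * ‖u‖ ^ (p - 1) :=
          mul_le_mul_of_nonneg_right hP (Real.rpow_nonneg ha _)
      _ = p * (‖v‖ ^ (p - 1) * ‖u‖ ^ (p - 1)) * ‖v - z‖ := by ring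
      _ ≤ p * X * ‖v - z‖ := by
          refine mul_le_mul_of_nonneg_right (mul_le_mul_of_nonneg_left ?_ hp0) (norm_nonneg _)
          exact le_trans (le_add_of_nonneg_right (by positivity)) (le_max_left _ _)
  have T2 : ‖(‖z‖ ^ p : ℝ) • ((‖u‖ ^ (p - 2) : ℝ) • u - (‖w‖ ^ (p - 2) : ℝ) • w)‖
      ≤ p * X * ‖u - w‖ := by
    rw [norm_smul, Real.norm_eq_abs, abs_of_nonneg (Real.rpow_nonneg hd _)]
    have hV := keyV (p - 2) (by linarith) u w
    calc ‖z‖ ^ p * ‖(‖u‖ ^ (p - 2) : ℝ) • u - (‖w‖ ^ (p - 2) : ℝ) • w‖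
        ≤ ‖z‖ ^ p * ((p - 2 + 2) * (max ‖u‖ ‖w‖) ^ (p - 2) * ‖u - w‖) :=
          mul_le_mul_of_nonneg_left hV (Real.rpow_nonneg hd _)
      _ = p * (‖z‖ ^ p * (max ‖u‖ ‖w‖) ^ (p - 2)) * ‖u - w‖ := by ring_nf
      _ ≤ p * X * ‖u - w‖ := by
          refine mul_le_mul_of_nonneg_right (mul_le_mul_of_nonneg_left ?_ hp0) (norm_nonneg _)
          rcases le_total ‖w‖ ‖u‖ with h | h
          · rw [max_eq_left h]
            refine le_trans ?_ (le_max_left _ _)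
            refine le_trans ?_ (le_add_of_nonneg_left (by positivity))
            exact mul_le_mul_of_nonneg_right
              (Real.rpow_le_rpow hd hdb hp0) (Real.rpow_nonneg ha _)
          · rw [max_eq_right h]
            exact le_trans (le_add_of_nonneg_left (by positivity)) (le_max_right _ _)
  calc ‖(‖v‖ ^ p * ‖u‖ ^ (p - 2) : ℝ) • u - (‖z‖ ^ p * ‖w‖ ^ (p - 2) : ℝ) • w‖
      = ‖((‖v‖ ^ p - ‖z‖ ^ p) * ‖u‖ ^ (p - 2) : ℝ) • u
        + (‖z‖ ^ p : ℝ) • ((‖u‖ ^ (p - 2) : ℝ) • u - (‖w‖ ^ (p - 2) : ℝ) • w)‖ := by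
        rw [hdec]
    _ ≤ ‖((‖v‖ ^ p - ‖z‖ ^ p) * ‖u‖ ^ (p - 2) : ℝ) • u‖
        + ‖(‖z‖ ^ p : ℝ) • ((‖u‖ ^ (p - 2) : ℝ) • u - (‖w‖ ^ (p - 2) : ℝ) • w)‖ :=
        norm_add_le _ _
    _ ≤ p * X * ‖v - z‖ + p * X * ‖u - w‖ := add_le_add T1 T2
    _ = p * X * (‖u - w‖ + ‖v - z‖) := by ring

/-- Mean-value-theorem estimate for the nonlinearity `f(u,v) = |v|^p |u|^{p-2} u`
on `ℂ × ℂ`. -/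
theorem stmt_4 (p : ℝ) (hp : 2 ≤ p) :
    ∃ C > (0:ℝ), ∀ u v w z : ℂ,
      ‖(‖v‖ ^ p * ‖u‖ ^ (p - 2) : ℝ) • u - (‖z‖ ^ p * ‖w‖ ^ (p - 2) : ℝ) • w‖ ≤
        C * max (‖v‖ ^ (p - 1) * ‖u‖ ^ (p - 1) + ‖v‖ ^ p * ‖u‖ ^ (p - 2))
                (‖z‖ ^ (p - 1) * ‖w‖ ^ (p - 1) + ‖z‖ ^ p * ‖w‖ ^ (p - 2)) *
          (‖u - w‖ + ‖v - z‖) := by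
  refine ⟨p, by linarith, fun u v w z => ?_⟩
  rcases le_total ‖z‖ ‖v‖ with h | h
  · exact main_aux p hp u v w z h
  · have hsymm := main_aux p hp w z u v h
    calc ‖(‖v‖ ^ p * ‖u‖ ^ (p - 2) : ℝ) • u - (‖z‖ ^ p * ‖w‖ ^ (p - 2) : ℝ) • w‖
        = ‖(‖z‖ ^ p * ‖w‖ ^ (p - 2) : ℝ) • w - (‖v‖ ^ p * ‖u‖ ^ (p - 2) : ℝ) • u‖ :=
          norm_sub_rev _ _
      _ ≤ p * max (‖z‖ ^ (p - 1) * ‖w‖ ^ (p - 1) + ‖z‖ ^ p * ‖w‖ ^ (p - 2))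
              (‖v‖ ^ (p - 1) * ‖u‖ ^ (p - 1) + ‖v‖ ^ p * ‖u‖ ^ (p - 2)) *
          (‖w - u‖ + ‖z - v‖) := hsymm
      _ = p * max (‖v‖ ^ (p - 1) * ‖u‖ ^ (p - 1) + ‖v‖ ^ p * ‖u‖ ^ (p - 2))
                (‖z‖ ^ (p - 1) * ‖w‖ ^ (p - 1) + ‖z‖ ^ p * ‖w‖ ^ (p - 2)) *
          (‖u - w‖ + ‖v - z‖) := by
          rw [max_comm, norm_sub_rev w u, norm_sub_rev z v]
end

section
/- Let N ≥ 2, 1 + 2/N < p < N/(N−2) (p < ∞ if N = 2), and let (α,β) satisfy 2α+(N−2)β > 0, 2α+Nβ ≥ 0, 2α+(N+2)β ≥ 0. If (u^n) is a bounded sequence in H = Σ^m with u^n ≠ 0 and Σ_j K^Q_{α,β}(u_j^n) → 0, where K^Q_{α,β}(u_j) := (2α+(N−2)β)‖∇u_j‖² + (2α+Nβ)‖u_j‖² + (2α+(N+2)β)‖xu_j‖², then K_{α,β}(u^n) > 0 for all sufficiently large n. -/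
/-!
Write `Q = Σ_j K^Q(u_j)`. Since `2α + Nβ` is the mean of `2α + (N-2)β > 0` and
`2α + (N+2)β ≥ 0`, `Q` dominates `δ (‖u_j‖₂² + ‖∇u_j‖₂²)` with `δ = (2α + (N-2)β)/2`.
The Gagliardo–Nirenberg inequality `∫ |u|^{2p} ≤ C (‖u‖₂² + ‖∇u‖₂²)^p`, valid for
`N/(N-1) < p` and `(N-2) p < N`, then bounds the nonlinear part of `K` by `C' Q^p`, so
`K(uⁿ) ≥ Qₙ/2 - C' Qₙ^p > 0` as soon as `0 < Qₙ` is small, because `p > 1`.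

Gagliardo–Nirenberg follows from the `L¹` Sobolev inequality `‖v‖_{N/(N-1)} ≤ C ‖∇v‖₁` applied
to `v = |u|^γ` with `γ = 2p(N-1)/N`: Cauchy–Schwarz and Hölder interpolation of `|u|^{2γ-2}`
between `L¹` norms of `|u|²` and `|u|^{2p}` give `X ≤ c (‖u‖₂² + ‖∇u‖₂²)^e X^b` for
`X = ∫ |u|^{2p}` and some `b < 1`, and `X < ∞` lets one absorb `X^b`. The `L¹` Sobolev
inequality comes from the grid-lines (Loomis–Whitney) argument, with compact support replaced
by integrability: on almost every coordinate line the function is integrable, and an integrable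
function with integrable derivative on a half-line tends to `0` at `-∞`.
-/

open MeasureTheory Filter

/-- The quadratic part `K^Q_{α,β}(u_j)`. -/
noncomputable def KQfun (N : ℕ) (α β : ℝ) (u : EuclideanSpace ℝ (Fin N) → ℂ) : ℝ :=
  (2*α + ((N:ℝ) - 2)*β) * (∫ x, ‖fderiv ℝ u x‖^2)
    + (2*α + (N:ℝ)*β) * (∫ x, ‖u x‖^2)
    + (2*α + ((N:ℝ) + 2)*β) * (∫ x, ‖x‖^2 * ‖u x‖^2)

/-- The constraint functional `K_{α,β}(u)`. -/
noncomputable def Kfun (N m : ℕ) (p α β : ℝ) (a : Fin m → Fin m → ℝ)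
    (u : Fin m → EuclideanSpace ℝ (Fin N) → ℂ) : ℝ :=
  (1/2) * (∑ j, KQfun N α β (u j))
    - (2*p*α + (N:ℝ)*β)/(2*p) * ∑ j, ∑ k, a j k * ∫ x, (‖u j x‖ * ‖u k x‖) ^ p

open Set
open scoped ENNReal NNReal Topology

theorem enorm_le_lintegral_Iic_enorm_deriv_of_integrable {F : Type*} [NormedAddCommGroup F]
    [NormedSpace ℝ F] [CompleteSpace F] {f : ℝ → F} (hf : Differentiable ℝ f)
    (hfi : Integrable f) (x : ℝ) :
    ‖f x‖ₑ ≤ ∫⁻ y in Iic x, ‖deriv f y‖ₑ := by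
  by_cases hfin : ∫⁻ y in Iic x, ‖deriv f y‖ₑ = ∞
  · simp [hfin]
  have hderiv : ∀ y ∈ Iic x, HasDerivAt f (deriv f y) y := fun y _ => (hf y).hasDerivAt
  have hdi : IntegrableOn (deriv f) (Iic x) :=
    ⟨aestronglyMeasurable_deriv f _, lt_top_iff_ne_top.2 hfin⟩
  have hlim := tendsto_zero_of_hasDerivAt_of_integrableOn_Iic hderiv hdi hfi.integrableOn
  rw [← sub_zero (f x), ← integral_Iic_of_hasDerivAt_of_tendsto' hderiv hdi hlim]
  exact enorm_integral_le_lintegral_enorm _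

theorem MeasureTheory.Integrable.ae_integrable_update {n : ℕ} {α E : Type*} [MeasurableSpace α]
    {μ : Measure α} [SigmaFinite μ] [NormedAddCommGroup E]
    {f : (Fin (n + 1) → α) → E} (hf : Integrable f (Measure.pi fun _ => μ)) (i : Fin (n + 1)) :
    ∀ᵐ x ∂Measure.pi (fun _ => μ), Integrable (fun t => f (Function.update x i t)) μ := by
  let e := MeasurableEquiv.piFinSuccAbove (fun _ => α) i
  have he : MeasurePreserving e _ _ := measurePreserving_piFinSuccAbove (fun _ => μ) i
  have hprod : Integrable (f ∘ e.symm) (μ.prod (Measure.pi fun _ => μ)) :=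
    ((he.symm e).integrable_comp_emb e.symm.measurableEmbedding).2 hf
  have hsnd := (Measure.quasiMeasurePreserving_snd.comp he.quasiMeasurePreserving).ae
    hprod.prod_left_ae
  filter_upwards [hsnd] with x hx
  convert hx using 2 with t
  exact congrArg f (Fin.insertNth_removeNth i t x).symm

theorem lintegral_pow_le_pow_lintegral_fderiv_of_integrable {F : Type*} [NormedAddCommGroup F]
    [NormedSpace ℝ F] [CompleteSpace F] {N : ℕ} {p : ℝ} (hp : Real.HolderConjugate N p)
    {u : (Fin N → ℝ) → F} (hu : Differentiable ℝ u) (hui : Integrable u) :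
    ∫⁻ x, ‖u x‖ₑ ^ p ≤ (∫⁻ x, ‖fderiv ℝ u x‖ₑ) ^ p := by
  obtain ⟨n, rfl⟩ : ∃ n, N = n + 1 :=
    Nat.exists_eq_add_one.2 (by exact_mod_cast one_pos.trans hp.lt)
  have hp' : Real.HolderConjugate (Fintype.card (Fin (n + 1))) p := by simpa using hp
  push_cast at hp
  have hslices : ∀ᵐ x : Fin (n + 1) → ℝ, ∀ i, Integrable (fun t => u (Function.update x i t)) :=
    ae_all_iff.2 fun i => hui.ae_integrable_update i
  calc ∫⁻ x, ‖u x‖ₑ ^ p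
      = ∫⁻ x, ∏ _i : Fin (n + 1), ‖u x‖ₑ ^ (1 / (n : ℝ)) := by
        congr! 2 with x
        rw [Finset.prod_const, Finset.card_univ, Fintype.card_fin, ← ENNReal.rpow_natCast,
          ← ENNReal.rpow_mul, hp.conjugate_eq]
        push_cast
        congr 1
        ring
    _ ≤ ∫⁻ x, ∏ i, (∫⁻ t, ‖fderiv ℝ u (Function.update x i t)‖ₑ) ^ (1 / (n : ℝ)) := by
        refine lintegral_mono_ae ?_
        filter_upwards [hslices] with x hx
        gcongr with i
        calc ‖u x‖ₑ = ‖(u ∘ Function.update x i) (x i)‖ₑ := by simp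
          _ ≤ ∫⁻ t in Iic (x i), ‖deriv (u ∘ Function.update x i) t‖ₑ :=
            enorm_le_lintegral_Iic_enorm_deriv_of_integrable
              (hu.comp fun t => (hasDerivAt_update x i t).differentiableAt) (hx i) _
          _ ≤ ∫⁻ t, ‖fderiv ℝ u (Function.update x i t)‖ₑ := by
            refine (setLIntegral_le_lintegral _ _).trans (lintegral_mono fun t => ?_)
            rw [fderiv_comp_deriv _ (hu _) (hasDerivAt_update x i t).differentiableAt]
            refine (ContinuousLinearMap.le_opENorm _ _).trans ?_
            simp [deriv_update, Pi.enorm_single]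
    _ ≤ (∫⁻ x, ‖fderiv ℝ u x‖ₑ) ^ p := by
        have := lintegral_prod_lintegral_pow_le (fun _ : Fin (n + 1) => volume) hp'
          (measurable_fderiv ℝ u).enorm
        rw [volume_pi]
        simpa using this

theorem exists_lintegral_pow_le_pow_lintegral_fderiv_euclidean (F : Type*) [NormedAddCommGroup F]
    [NormedSpace ℝ F] [CompleteSpace F] {N : ℕ} {p : ℝ} (hp : Real.HolderConjugate N p) :
    ∃ C : ℝ≥0, ∀ u : EuclideanSpace ℝ (Fin N) → F, Differentiable ℝ u → Integrable u →
      ∫⁻ x, ‖u x‖ₑ ^ p ≤ C * (∫⁻ x, ‖fderiv ℝ u x‖ₑ) ^ p := by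
  let Φ : (Fin N → ℝ) ≃L[ℝ] EuclideanSpace ℝ (Fin N) := (EuclideanSpace.equiv (Fin N) ℝ).symm
  have hΦ : MeasurePreserving Φ := PiLp.volume_preserving_toLp (Fin N)
  have hΦe : MeasurableEmbedding Φ := (MeasurableEquiv.toLp 2 (Fin N → ℝ)).measurableEmbedding
  refine ⟨‖(Φ : (Fin N → ℝ) →L[ℝ] EuclideanSpace ℝ (Fin N))‖₊ ^ p, fun u hu hui => ?_⟩
  calc ∫⁻ x, ‖u x‖ₑ ^ p = ∫⁻ y, ‖(u ∘ Φ) y‖ₑ ^ p := (hΦ.lintegral_comp_emb hΦe _).symm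
    _ ≤ (∫⁻ y, ‖fderiv ℝ (u ∘ Φ) y‖ₑ) ^ p :=
        lintegral_pow_le_pow_lintegral_fderiv_of_integrable hp (hu.comp Φ.differentiable)
          ((hΦ.integrable_comp_emb hΦe).2 hui)
    _ ≤ (∫⁻ y, ‖(Φ : (Fin N → ℝ) →L[ℝ] EuclideanSpace ℝ (Fin N))‖ₑ * ‖fderiv ℝ u (Φ y)‖ₑ) ^ p := by
        gcongr with y
        · exact hp.symm.nonneg
        rw [fderiv_comp _ (hu _) Φ.differentiableAt, Φ.fderiv, mul_comm]
        exact ContinuousLinearMap.opENorm_comp_le _ _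
    _ = _ := by
        rw [lintegral_const_mul' _ _ enorm_ne_top, hΦ.lintegral_comp_emb hΦe
          (fun x => ‖fderiv ℝ u x‖ₑ), ENNReal.mul_rpow_of_nonneg _ _ hp.symm.nonneg,
          ENNReal.coe_rpow_of_nonneg _ hp.symm.nonneg]
        rfl

theorem ENNReal.rpow_le_rpow_add_rpow (x : ℝ≥0∞) {a b c : ℝ} (hab : a ≤ b) (hbc : b ≤ c) :
    x ^ b ≤ x ^ a + x ^ c := by
  rcases le_total x 1 with hx | hx
  · exact (ENNReal.rpow_le_rpow_of_exponent_ge hx hab).trans le_self_add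
  · exact (ENNReal.rpow_le_rpow_of_exponent_le hx hbc).trans le_add_self

theorem ENNReal.le_rpow_inv_of_le_mul_rpow {x c : ℝ≥0∞} {b : ℝ} (hx : x ≠ ∞) (hb0 : 0 ≤ b)
    (hb1 : b < 1) (h : x ≤ c * x ^ b) : x ≤ c ^ (1 - b)⁻¹ := by
  rcases eq_or_ne x 0 with rfl | hx0
  · exact zero_le
  have hxb0 : x ^ b ≠ 0 := (ENNReal.rpow_pos (pos_iff_ne_zero.2 hx0) hx).ne'
  have hxb : x ^ b ≠ ∞ := ENNReal.rpow_ne_top_of_nonneg hb0 hx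
  have h1 : x ^ (1 - b) ≤ c := by
    rwa [← ENNReal.mul_le_mul_iff_left hxb0 hxb,
      ← ENNReal.rpow_add_of_nonneg _ _ (by linarith) hb0, sub_add_cancel, ENNReal.rpow_one]
  calc x = (x ^ (1 - b)) ^ (1 - b)⁻¹ := by
        rw [← ENNReal.rpow_mul, mul_inv_cancel₀ (by linarith), ENNReal.rpow_one]
    _ ≤ c ^ (1 - b)⁻¹ := ENNReal.rpow_le_rpow h1 (inv_nonneg.2 (by linarith))

theorem lintegral_rpow_interpolation_le {α : Type*} [MeasurableSpace α] {μ : Measure α}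
    {f : α → ℝ≥0∞} (hf : AEMeasurable f μ) {a b s : ℝ} (ha : 0 ≤ a) (hb : 0 ≤ b) (hs0 : 0 ≤ s)
    (hs1 : s ≤ 1) :
    ∫⁻ x, f x ^ ((1 - s) * a + s * b) ∂μ
      ≤ (∫⁻ x, f x ^ a ∂μ) ^ (1 - s) * (∫⁻ x, f x ^ b ∂μ) ^ s := by
  calc _ = ∫⁻ x, (f x ^ a) ^ (1 - s) * (f x ^ b) ^ s ∂μ := by
        congr! 2 with x
        rw [← ENNReal.rpow_mul, ← ENNReal.rpow_mul,
          ← ENNReal.rpow_add_of_nonneg _ _ (by nlinarith) (by positivity)]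
        ring_nf
    _ ≤ _ := ENNReal.lintegral_mul_norm_pow_le (hf.pow_const a) (hf.pow_const b) (by linarith) hs0
        (by ring)

theorem lintegral_enorm_fderiv_norm_rpow_le {E F : Type*} [NormedAddCommGroup E]
    [NormedSpace ℝ E] [MeasurableSpace E] [OpensMeasurableSpace E] [NormedAddCommGroup F]
    [InnerProductSpace ℝ F] [CompleteSpace F] (μ : Measure E) {u : E → F}
    (hu : Differentiable ℝ u) {γ : ℝ} (hγ : 1 < γ) :
    ∫⁻ x, ‖fderiv ℝ (fun x => ‖u x‖ ^ γ) x‖ₑ ∂μ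
      ≤ ENNReal.ofReal γ * ((∫⁻ x, ‖u x‖ₑ ^ (2 * γ - 2) ∂μ) ^ (1 / 2 : ℝ)
        * (∫⁻ x, ‖fderiv ℝ u x‖ₑ ^ (2 : ℝ) ∂μ) ^ (1 / 2 : ℝ)) := by
  lift γ to ℝ≥0 using by linarith
  have hu_meas : AEMeasurable (fun x => ‖u x‖ₑ) μ := hu.continuous.enorm.measurable.aemeasurable
  have hdu_meas : AEMeasurable (fun x => ‖fderiv ℝ u x‖ₑ) μ :=
    (measurable_fderiv ℝ u).enorm.aemeasurable
  calc _ ≤ ∫⁻ x, γ * (‖u x‖ₑ ^ ((γ : ℝ) - 1) * ‖fderiv ℝ u x‖ₑ) ∂μ :=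
        lintegral_mono fun x => (enorm_fderiv_norm_rpow_le hu hγ).trans_eq (mul_assoc _ _ _)
    _ = γ * ∫⁻ x, ‖u x‖ₑ ^ ((γ : ℝ) - 1) * ‖fderiv ℝ u x‖ₑ ∂μ :=
        lintegral_const_mul' _ _ ENNReal.coe_ne_top
    _ = γ * ∫⁻ x, (‖u x‖ₑ ^ (2 * (γ : ℝ) - 2)) ^ (1 / 2 : ℝ)
          * (‖fderiv ℝ u x‖ₑ ^ (2 : ℝ)) ^ (1 / 2 : ℝ) ∂μ := by
        congr! 3 with x
        rw [← ENNReal.rpow_mul, ← ENNReal.rpow_mul]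
        norm_num
        ring_nf
    _ ≤ _ := by
        rw [ENNReal.ofReal_coe_nnreal]
        gcongr
        exact ENNReal.lintegral_mul_norm_pow_le (hu_meas.pow_const _) (hdu_meas.pow_const _)
          (by norm_num) (by norm_num) (by norm_num)

theorem integrable_norm_rpow_of_lintegral_ne_top {α F : Type*} [MeasurableSpace α]
    {μ : Measure α} [NormedAddCommGroup F] {u : α → F} (hu : AEStronglyMeasurable u μ)
    {a b c : ℝ} (hab : a ≤ b) (hbc : b ≤ c) (hb : 0 ≤ b) (ha : ∫⁻ x, ‖u x‖ₑ ^ a ∂μ ≠ ∞)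
    (hc : ∫⁻ x, ‖u x‖ₑ ^ c ∂μ ≠ ∞) :
    Integrable (fun x => ‖u x‖ ^ b) μ := by
  refine ⟨(hu.norm.aemeasurable.pow_const b).aestronglyMeasurable, ?_⟩
  calc ∫⁻ x, ‖‖u x‖ ^ b‖ₑ ∂μ = ∫⁻ x, ‖u x‖ₑ ^ b ∂μ := by
        simp_rw [Real.enorm_rpow_of_nonneg (norm_nonneg _) hb, enorm_norm]
    _ ≤ ∫⁻ x, (‖u x‖ₑ ^ a + ‖u x‖ₑ ^ c) ∂μ :=
        lintegral_mono fun x => ENNReal.rpow_le_rpow_add_rpow _ hab hbc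
    _ = (∫⁻ x, ‖u x‖ₑ ^ a ∂μ) + ∫⁻ x, ‖u x‖ₑ ^ c ∂μ :=
        lintegral_add_left' (hu.enorm.pow_const a) _
    _ < ∞ := by finiteness

/-- With `q = n/(n-1)`, `|u|^γ` has `q`-th power `|u|^{2p}`, `s` interpolates `2γ - 2` between
`2` and `2p`, `s q / 2` is the power of `∫ |u|^{2p}` to be absorbed, and the last identity makes the
final power of `‖u‖₂² + ‖∇u‖₂²` equal to `p`. -/
theorem gagliardoNirenberg_exponents {n p : ℝ} (hn : 2 ≤ n) (hp : n < (n - 1) * p)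
    (hpc : (n - 2) * p < n) :
    ∃ γ s : ℝ, 2 ≤ γ ∧ γ ≤ 2 * p ∧ γ * (n / (n - 1)) = 2 * p ∧ 0 ≤ s ∧ s ≤ 1 ∧
      2 * γ - 2 = (1 - s) * 2 + s * (2 * p) ∧ s * (n / (n - 1)) / 2 < 1 ∧
      (2 - s) * (n / (n - 1)) / 2 * (1 - s * (n / (n - 1)) / 2)⁻¹ = p := by
  have hn1 : 0 < n - 1 := by linarith
  have hp1 : 0 < p - 1 := by nlinarith
  have hq2 : n / (n - 1) ≤ 2 := by rw [div_le_iff₀ hn1]; linarith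
  have hq0 : 0 ≤ n / (n - 1) := by positivity
  set γ := 2 * p * (n - 1) / n with hγ
  have hγ2 : 2 ≤ γ := by rw [hγ, le_div_iff₀ (by linarith)]; linarith
  have hγp : γ - 2 < p - 1 := by
    rw [hγ, div_sub' (by positivity), div_lt_iff₀ (by positivity)]
    nlinarith
  set s := (γ - 2) / (p - 1) with hs
  have hs0 : 0 ≤ s := div_nonneg (by linarith) hp1.le
  have hs1 : s < 1 := (div_lt_one hp1).2 hγp
  have hb : s * (n / (n - 1)) / 2 < 1 := by nlinarith
  refine ⟨γ, s, hγ2, ?_, ?_, hs0, hs1.le, ?_, hb, ?_⟩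
  · rw [hγ, div_le_iff₀ (by positivity)]; nlinarith
  · rw [hγ]; field_simp
  · rw [hs]; field_simp; ring
  · have hb' : 1 - s * (n / (n - 1)) / 2 ≠ 0 := by linarith
    rw [← div_eq_mul_inv, div_eq_iff hb', hs, hγ]
    field_simp
    ring

theorem lintegral_rpow_le_mul_rpow_mul_rpow_of_sobolev {E F : Type*} [NormedAddCommGroup E]
    [NormedSpace ℝ E] [MeasurableSpace E] [OpensMeasurableSpace E] [SecondCountableTopology E]
    [NormedAddCommGroup F] [InnerProductSpace ℝ F] [CompleteSpace F] {μ : Measure E} {q : ℝ}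
    {C₀ : ℝ≥0∞} (hq : 0 ≤ q)
    (hC₀ : ∀ v : E → ℝ, Differentiable ℝ v → Integrable v μ →
      ∫⁻ x, ‖v x‖ₑ ^ q ∂μ ≤ C₀ * (∫⁻ x, ‖fderiv ℝ v x‖ₑ ∂μ) ^ q)
    {p γ s : ℝ} (hγ2 : 2 ≤ γ) (hγp : γ ≤ 2 * p) (hγq : γ * q = 2 * p) (hs0 : 0 ≤ s)
    (hs1 : s ≤ 1) (hγs : 2 * γ - 2 = (1 - s) * 2 + s * (2 * p)) {u : E → F}
    (hu : Differentiable ℝ u) (hA : ∫⁻ x, ‖u x‖ₑ ^ (2 : ℝ) ∂μ ≠ ∞)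
    (hX : ∫⁻ x, ‖u x‖ₑ ^ (2 * p) ∂μ ≠ ∞) :
    ∫⁻ x, ‖u x‖ₑ ^ (2 * p) ∂μ
      ≤ C₀ * ENNReal.ofReal γ ^ q
        * ((∫⁻ x, ‖u x‖ₑ ^ (2 : ℝ) ∂μ) + ∫⁻ x, ‖fderiv ℝ u x‖ₑ ^ (2 : ℝ) ∂μ) ^ ((2 - s) * q / 2)
        * (∫⁻ x, ‖u x‖ₑ ^ (2 * p) ∂μ) ^ (s * q / 2) := by
  set A := ∫⁻ x, ‖u x‖ₑ ^ (2 : ℝ) ∂μ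
  set G := ∫⁻ x, ‖fderiv ℝ u x‖ₑ ^ (2 : ℝ) ∂μ
  set X := ∫⁻ x, ‖u x‖ₑ ^ (2 * p) ∂μ
  have hv := hC₀ (fun x => ‖u x‖ ^ γ) (hu.norm_rpow (by linarith))
    (integrable_norm_rpow_of_lintegral_ne_top hu.continuous.aestronglyMeasurable hγ2 hγp
      (by linarith) hA hX)
  calc X = ∫⁻ x, ‖‖u x‖ ^ γ‖ₑ ^ q ∂μ := by
        simp_rw [Real.enorm_rpow_of_nonneg (norm_nonneg _) (by linarith : 0 ≤ γ), enorm_norm,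
          ← ENNReal.rpow_mul, hγq, X]
    _ ≤ C₀ * (ENNReal.ofReal γ
          * ((∫⁻ x, ‖u x‖ₑ ^ (2 * γ - 2) ∂μ) ^ (1 / 2 : ℝ) * G ^ (1 / 2 : ℝ))) ^ q := by
        refine hv.trans ?_
        gcongr
        exact lintegral_enorm_fderiv_norm_rpow_le _ hu (by linarith)
    _ ≤ C₀ * (ENNReal.ofReal γ
          * (((A + G) ^ (1 - s) * X ^ s) ^ (1 / 2 : ℝ) * (A + G) ^ (1 / 2 : ℝ))) ^ q := by
        rw [hγs]
        gcongr
        · exact (lintegral_rpow_interpolation_le hu.continuous.enorm.measurable.aemeasurable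
            zero_le_two (by linarith) hs0 hs1).trans (by gcongr; exact le_self_add)
        · exact le_add_self
    _ = _ := by
        simp only [ENNReal.mul_rpow_of_nonneg _ _ hq,
          ENNReal.mul_rpow_of_nonneg _ _ (by norm_num : (0 : ℝ) ≤ 1 / 2), ← ENNReal.rpow_mul]
        rw [show (2 - s) * q / 2 = (1 - s) * (1 / 2) * q + 1 / 2 * q by ring,
          ENNReal.rpow_add_of_nonneg _ _ (mul_nonneg (by linarith) hq) (by positivity),
          show s * q / 2 = s * (1 / 2) * q by ring]
        ring

theorem exists_lintegral_rpow_le_mul_rpow_add (F : Type*) [NormedAddCommGroup F]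
    [InnerProductSpace ℝ F] [CompleteSpace F] {N : ℕ} (hN : 2 ≤ N) {p : ℝ}
    (hp : N < ((N : ℝ) - 1) * p) (hpc : ((N : ℝ) - 2) * p < N) :
    ∃ C : ℝ≥0, ∀ u : EuclideanSpace ℝ (Fin N) → F, Differentiable ℝ u →
      ∫⁻ x, ‖u x‖ₑ ^ (2 : ℝ) ≠ ∞ → ∫⁻ x, ‖u x‖ₑ ^ (2 * p) ≠ ∞ →
      ∫⁻ x, ‖u x‖ₑ ^ (2 * p)
        ≤ C * ((∫⁻ x, ‖u x‖ₑ ^ (2 : ℝ)) + ∫⁻ x, ‖fderiv ℝ u x‖ₑ ^ (2 : ℝ)) ^ p := by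
  have hN' : (2 : ℝ) ≤ N := by exact_mod_cast hN
  obtain ⟨γ, s, hγ2, hγp, hγq, hs0, hs1, hγs, hb1, hexp⟩ :=
    gagliardoNirenberg_exponents hN' hp hpc
  set q := (N : ℝ) / (N - 1)
  have hq : Real.HolderConjugate N q := .conjExponent (by linarith)
  obtain ⟨C₀, hC₀⟩ := exists_lintegral_pow_le_pow_lintegral_fderiv_euclidean ℝ hq
  have hb : 0 ≤ (1 - s * q / 2)⁻¹ := inv_nonneg.2 (by linarith)
  have hK : (C₀ * ENNReal.ofReal γ ^ q) ^ (1 - s * q / 2)⁻¹ ≠ ∞ := by finiteness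
  refine ⟨((C₀ * ENNReal.ofReal γ ^ q) ^ (1 - s * q / 2)⁻¹).toNNReal, fun u hu hA hX => ?_⟩
  have hq0 := hq.symm.nonneg
  have hbound := lintegral_rpow_le_mul_rpow_mul_rpow_of_sobolev hq0 hC₀ hγ2 hγp hγq hs0 hs1 hγs
    hu hA hX
  refine (ENNReal.le_rpow_inv_of_le_mul_rpow hX (by positivity) hb1 hbound).trans_eq ?_
  rw [ENNReal.mul_rpow_of_nonneg _ _ hb, ← ENNReal.rpow_mul, hexp, ENNReal.coe_toNNReal hK]

theorem ofReal_integral_norm_rpow {α F : Type*} [MeasurableSpace α] {μ : Measure α}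
    [NormedAddCommGroup F] {f : α → F} {r : ℝ} (hr : 0 ≤ r)
    (hf : Integrable (fun x => ‖f x‖ ^ r) μ) :
    ENNReal.ofReal (∫ x, ‖f x‖ ^ r ∂μ) = ∫⁻ x, ‖f x‖ₑ ^ r ∂μ := by
  rw [ofReal_integral_eq_lintegral_ofReal hf (ae_of_all _ fun x => by positivity)]
  congr! 2 with x
  rw [← ofReal_norm, ENNReal.ofReal_rpow_of_nonneg (norm_nonneg _) hr]

theorem exists_integral_rpow_le_mul_rpow_add (F : Type*) [NormedAddCommGroup F]
    [InnerProductSpace ℝ F] [CompleteSpace F] {N : ℕ} (hN : 2 ≤ N) {p : ℝ}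
    (hp : N < ((N : ℝ) - 1) * p) (hpc : ((N : ℝ) - 2) * p < N) :
    ∃ C : ℝ≥0, ∀ u : EuclideanSpace ℝ (Fin N) → F, Differentiable ℝ u →
      Integrable (fun x => ‖u x‖ ^ 2) → Integrable (fun x => ‖fderiv ℝ u x‖ ^ 2) →
      Integrable (fun x => (‖u x‖ * ‖u x‖) ^ p) →
      ∫ x, (‖u x‖ * ‖u x‖) ^ p ≤ C * ((∫ x, ‖u x‖ ^ 2) + ∫ x, ‖fderiv ℝ u x‖ ^ 2) ^ p := by
  have hp0 : 0 ≤ p := by nlinarith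
  obtain ⟨C, hC⟩ := exists_lintegral_rpow_le_mul_rpow_add F hN hp hpc
  refine ⟨C, fun u hu hA hG hX => ?_⟩
  simp_rw [← Real.rpow_two] at hA hG ⊢
  have hsq : ∀ x, (‖u x‖ * ‖u x‖) ^ p = ‖u x‖ ^ (2 * p) := fun x => by
    rw [Real.rpow_mul (norm_nonneg _), Real.rpow_two, sq]
  simp_rw [hsq] at hX ⊢
  have hA' := ofReal_integral_norm_rpow zero_le_two hA
  have hG' := ofReal_integral_norm_rpow zero_le_two hG
  have hX' := ofReal_integral_norm_rpow (by positivity) hX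
  have hAG : 0 ≤ (∫ x, ‖u x‖ ^ (2 : ℝ)) + ∫ x, ‖fderiv ℝ u x‖ ^ (2 : ℝ) := by positivity
  rw [← ENNReal.ofReal_le_ofReal_iff (by positivity), hX', ENNReal.ofReal_mul C.coe_nonneg,
    ← ENNReal.ofReal_rpow_of_nonneg hAG hp0, ENNReal.ofReal_add (by positivity) (by positivity),
    hA', hG', ENNReal.ofReal_coe_nnreal]
  exact hC u hu (hA' ▸ ENNReal.ofReal_ne_top) (hX' ▸ ENNReal.ofReal_ne_top)

theorem integral_mul_rpow_le_add {α F : Type*} [MeasurableSpace α] {μ : Measure α}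
    [NormedAddCommGroup F] {f g : α → F} {p : ℝ}
    (hf : Integrable (fun x => (‖f x‖ * ‖f x‖) ^ p) μ)
    (hg : Integrable (fun x => (‖g x‖ * ‖g x‖) ^ p) μ) :
    ∫ x, (‖f x‖ * ‖g x‖) ^ p ∂μ
      ≤ ((∫ x, (‖f x‖ * ‖f x‖) ^ p ∂μ) + ∫ x, (‖g x‖ * ‖g x‖) ^ p ∂μ) / 2 := by
  rw [← integral_add hf hg, ← integral_div]
  refine integral_mono_of_nonneg (ae_of_all _ fun x => by positivity) ((hf.add hg).div_const 2)
    (ae_of_all _ fun x => ?_)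
  have h₁ := norm_nonneg (f x)
  have h₂ := norm_nonneg (g x)
  simp only [Real.mul_rpow h₁ h₂, Real.mul_rpow h₁ h₁, Real.mul_rpow h₂ h₂]
  nlinarith [sq_nonneg (‖f x‖ ^ p - ‖g x‖ ^ p)]

theorem sum_sum_mul_integral_rpow_le {ι α F : Type*} [Fintype ι] [MeasurableSpace α]
    {μ : Measure α} [NormedAddCommGroup F] {a : ι → ι → ℝ} (ha : ∀ j k, 0 ≤ a j k)
    {f : ι → α → F} {p : ℝ} (hf : ∀ j, Integrable (fun x => (‖f j x‖ * ‖f j x‖) ^ p) μ) :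
    ∑ j, ∑ k, a j k * ∫ x, (‖f j x‖ * ‖f k x‖) ^ p ∂μ
      ≤ (∑ j, ∑ k, a j k) * ∑ l, ∫ x, (‖f l x‖ * ‖f l x‖) ^ p ∂μ := by
  have hX : ∀ j, ∫ x, (‖f j x‖ * ‖f j x‖) ^ p ∂μ ≤ ∑ l, ∫ x, (‖f l x‖ * ‖f l x‖) ^ p ∂μ :=
    fun j => Finset.single_le_sum (f := fun l => ∫ x, (‖f l x‖ * ‖f l x‖) ^ p ∂μ)
      (fun l _ => integral_nonneg fun x => by positivity) (Finset.mem_univ j)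
  rw [Finset.sum_mul]
  refine Finset.sum_le_sum fun j _ => ?_
  rw [Finset.sum_mul]
  refine Finset.sum_le_sum fun k _ => mul_le_mul_of_nonneg_left ?_ (ha j k)
  linarith [integral_mul_rpow_le_add (hf j) (hf k), hX j, hX k]

section Functionals

variable {N m : ℕ} {p α β : ℝ}

theorem mul_add_le_KQfun (hc1 : 0 ≤ 2 * α + ((N : ℝ) - 2) * β)
    (hc3 : 0 ≤ 2 * α + ((N : ℝ) + 2) * β) (u : EuclideanSpace ℝ (Fin N) → ℂ) :
    (2 * α + ((N : ℝ) - 2) * β) / 2 * ((∫ x, ‖u x‖ ^ 2) + ∫ x, ‖fderiv ℝ u x‖ ^ 2)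
      ≤ KQfun N α β u := by
  have hA : 0 ≤ ∫ x, ‖u x‖ ^ 2 := integral_nonneg fun x => by positivity
  have hG : 0 ≤ ∫ x, ‖fderiv ℝ u x‖ ^ 2 := integral_nonneg fun x => by positivity
  have hW : 0 ≤ ∫ x, ‖x‖ ^ 2 * ‖u x‖ ^ 2 := integral_nonneg fun x => by positivity
  unfold KQfun
  nlinarith [mul_nonneg hc1 hA, mul_nonneg hc3 hA, mul_nonneg hc1 hG, mul_nonneg hc3 hW]

theorem KQfun_nonneg (hc1 : 0 ≤ 2 * α + ((N : ℝ) - 2) * β)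
    (hc3 : 0 ≤ 2 * α + ((N : ℝ) + 2) * β) (u : EuclideanSpace ℝ (Fin N) → ℂ) :
    0 ≤ KQfun N α β u :=
  (mul_add_le_KQfun hc1 hc3 u).trans' <| by positivity

theorem mul_add_le_sum_KQfun (hc1 : 0 ≤ 2 * α + ((N : ℝ) - 2) * β)
    (hc3 : 0 ≤ 2 * α + ((N : ℝ) + 2) * β) (u : Fin m → EuclideanSpace ℝ (Fin N) → ℂ)
    (j : Fin m) :
    (2 * α + ((N : ℝ) - 2) * β) / 2 * ((∫ x, ‖u j x‖ ^ 2) + ∫ x, ‖fderiv ℝ (u j) x‖ ^ 2)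
      ≤ ∑ k, KQfun N α β (u k) :=
  (mul_add_le_KQfun hc1 hc3 _).trans <| Finset.single_le_sum
    (f := fun k => KQfun N α β (u k)) (fun k _ => KQfun_nonneg hc1 hc3 (u k)) (Finset.mem_univ j)

theorem sum_KQfun_pos (hc1 : 0 < 2 * α + ((N : ℝ) - 2) * β)
    (hc3 : 0 ≤ 2 * α + ((N : ℝ) + 2) * β) {u : Fin m → EuclideanSpace ℝ (Fin N) → ℂ}
    (hu : ∀ j, Continuous (u j)) (h2 : ∀ j, Integrable (fun x => ‖u j x‖ ^ 2)) (hne : u ≠ 0) :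
    0 < ∑ j, KQfun N α β (u j) := by
  obtain ⟨j, hj⟩ := Function.ne_iff.1 hne
  obtain ⟨x, hx⟩ := Function.ne_iff.1 hj
  have hA := integral_pos_of_integrable_nonneg_nonzero (f := fun x => ‖u j x‖ ^ 2)
    ((hu j).norm.pow 2) (h2 j) (fun _ => sq_nonneg _) (by simpa using hx)
  have hG : 0 ≤ ∫ x, ‖fderiv ℝ (u j) x‖ ^ 2 := integral_nonneg fun x => by positivity
  nlinarith [mul_add_le_sum_KQfun hc1.le hc3 u j]

theorem half_sum_KQfun_sub_le_Kfun {a : Fin m → Fin m → ℝ} (ha : ∀ j k, 0 ≤ a j k)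
    {u : Fin m → EuclideanSpace ℝ (Fin N) → ℂ}
    (hu : ∀ j, Integrable (fun x => (‖u j x‖ * ‖u j x‖) ^ p)) :
    (1 / 2) * ∑ j, KQfun N α β (u j) - |(2 * p * α + (N : ℝ) * β) / (2 * p)|
        * ((∑ j, ∑ k, a j k) * ∑ l, ∫ x, (‖u l x‖ * ‖u l x‖) ^ p)
      ≤ Kfun N m p α β a u := by
  have hNL : 0 ≤ ∑ j, ∑ k, a j k * ∫ x, (‖u j x‖ * ‖u k x‖) ^ p :=
    Finset.sum_nonneg fun j _ => Finset.sum_nonneg fun k _ =>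
      mul_nonneg (ha j k) (integral_nonneg fun x => by positivity)
  unfold Kfun
  nlinarith [le_abs_self ((2 * p * α + (N : ℝ) * β) / (2 * p)),
    abs_nonneg ((2 * p * α + (N : ℝ) * β) / (2 * p)), sum_sum_mul_integral_rpow_le ha hu]

theorem exists_sub_mul_rpow_le_Kfun (hc1 : 0 < 2 * α + ((N : ℝ) - 2) * β)
    (hc3 : 0 ≤ 2 * α + ((N : ℝ) + 2) * β) {a : Fin m → Fin m → ℝ} (ha : ∀ j k, 0 ≤ a j k)
    (hp : 0 ≤ p) {C : ℝ} (hC : 0 ≤ C) :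
    ∃ K : ℝ, ∀ u : Fin m → EuclideanSpace ℝ (Fin N) → ℂ,
      (∀ j, Integrable (fun x => (‖u j x‖ * ‖u j x‖) ^ p)) →
      (∀ j, ∫ x, (‖u j x‖ * ‖u j x‖) ^ p
        ≤ C * ((∫ x, ‖u j x‖ ^ 2) + ∫ x, ‖fderiv ℝ (u j) x‖ ^ 2) ^ p) →
      (∑ j, KQfun N α β (u j)) / 2 - K * (∑ j, KQfun N α β (u j)) ^ p
        ≤ Kfun N m p α β a u := by
  set δ := (2 * α + ((N : ℝ) - 2) * β) / 2
  have hδ : 0 < δ := by positivity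
  set κ := |(2 * p * α + (N : ℝ) * β) / (2 * p)| * ∑ j, ∑ k, a j k with hκ_def
  have hκ : 0 ≤ κ := mul_nonneg (abs_nonneg _)
    (Finset.sum_nonneg fun j _ => Finset.sum_nonneg fun k _ => ha j k)
  refine ⟨κ * (m * C / δ ^ p), fun u hu hGN => ?_⟩
  set Q := ∑ j, KQfun N α β (u j)
  have hX : ∑ l, ∫ x, (‖u l x‖ * ‖u l x‖) ^ p ≤ m * (C * (Q / δ) ^ p) := by
    calc ∑ l, ∫ x, (‖u l x‖ * ‖u l x‖) ^ p ≤ ∑ _l : Fin m, C * (Q / δ) ^ p := by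
          refine Finset.sum_le_sum fun l _ => (hGN l).trans ?_
          have := (le_div_iff₀' hδ).2 (mul_add_le_sum_KQfun hc1.le hc3 u l)
          gcongr
      _ = _ := by simp
  have hK := half_sum_KQfun_sub_le_Kfun (α := α) (β := β) ha hu
  rw [← mul_assoc, ← hκ_def] at hK
  have hsplit : κ * (m * (C * (Q / δ) ^ p)) = κ * (m * C / δ ^ p) * Q ^ p := by
    rw [Real.div_rpow (Finset.sum_nonneg fun j _ => KQfun_nonneg hc1.le hc3 (u j)) hδ.le]
    ring
  nlinarith [mul_le_mul_of_nonneg_left hX hκ]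

end Functionals

theorem eventually_mul_rpow_lt_half {ι : Type*} {l : Filter ι} {Q : ι → ℝ}
    (hQ : Tendsto Q l (𝓝 0)) (hQ_pos : ∀ i, 0 < Q i) {p : ℝ} (hp : 1 < p) (C : ℝ) :
    ∀ᶠ i in l, C * Q i ^ p < Q i / 2 := by
  have hlim := (hQ.rpow_const (Or.inr (by linarith : 0 ≤ p - 1))).const_mul C
  rw [Real.zero_rpow (by linarith), mul_zero] at hlim
  filter_upwards [hlim.eventually_lt_const (by norm_num : (0 : ℝ) < 1 / 2)] with i hi
  have hQi := hQ_pos i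
  calc C * Q i ^ p = C * Q i ^ (p - 1) * Q i := by
        rw [mul_assoc, ← Real.rpow_add_one hQi.ne', sub_add_cancel]
    _ < 1 / 2 * Q i := mul_lt_mul_of_pos_right hi hQi
    _ = Q i / 2 := by ring

theorem exponent_bounds_of_intercritical {N : ℕ} (hN : 2 ≤ N) {p : ℝ}
    (hp : 1 + 2 / (N : ℝ) < p) (hpc : 3 ≤ N → p < (N : ℝ) / ((N : ℝ) - 2)) :
    (N : ℝ) < ((N : ℝ) - 1) * p ∧ ((N : ℝ) - 2) * p < N := by
  have hN' : (2 : ℝ) ≤ N := by exact_mod_cast hN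
  have hNp : (N : ℝ) + 2 < N * p := by
    rwa [← sub_pos, show p - (1 + 2 / (N : ℝ)) = (N * p - (N + 2)) / N by field_simp,
      div_pos_iff_of_pos_right (by linarith), sub_pos] at hp
  refine ⟨by nlinarith, ?_⟩
  rcases hN.eq_or_lt with rfl | hN3
  · norm_num
  · have h := hpc hN3
    have hN3' : (3 : ℝ) ≤ N := by exact_mod_cast hN3
    rwa [lt_div_iff₀ (by linarith), mul_comm] at h

theorem stmt_8_general (N m : ℕ) (hN : 2 ≤ N) (p α β : ℝ)
    (hp : 1 + 2/(N:ℝ) < p) (hpc : 3 ≤ N → p < (N:ℝ)/((N:ℝ) - 2))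
    (hc1 : 0 < 2*α + ((N:ℝ) - 2)*β)
    (hc3 : 0 ≤ 2*α + ((N:ℝ) + 2)*β)
    (a : Fin m → Fin m → ℝ) (ha : ∀ j k, 0 < a j k)
    (u : ℕ → Fin m → EuclideanSpace ℝ (Fin N) → ℂ)
    (hd : ∀ n j, Differentiable ℝ (u n j))
    (h2 : ∀ n j, Integrable (fun x => ‖u n j x‖^2))
    (hg : ∀ n j, Integrable (fun x => ‖fderiv ℝ (u n j) x‖^2))
    (hnl : ∀ n j k, Integrable (fun x => (‖u n j x‖ * ‖u n k x‖) ^ p))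
    (hnz : ∀ n, u n ≠ 0)
    (hKQ : Tendsto (fun n => ∑ j, KQfun N α β (u n j)) atTop (nhds 0)) :
    ∃ n₀, ∀ n ≥ n₀, 0 < Kfun N m p α β a (u n) := by
  obtain ⟨hp', hpc'⟩ := exponent_bounds_of_intercritical hN hp hpc
  have hp1 : 1 < p := by linarith [show 0 < 2 / (N : ℝ) by positivity]
  obtain ⟨C, hGN⟩ := exists_integral_rpow_le_mul_rpow_add ℂ hN hp' hpc'
  obtain ⟨K, hK⟩ := exists_sub_mul_rpow_le_Kfun (a := a) (p := p) hc1 hc3 (fun j k => (ha j k).le)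
    (by linarith) C.coe_nonneg
  have hQ_pos := fun n => sum_KQfun_pos hc1 hc3 (fun j => (hd n j).continuous) (h2 n) (hnz n)
  obtain ⟨n₀, hn₀⟩ := eventually_atTop.1 (eventually_mul_rpow_lt_half hKQ hQ_pos hp1 K)
  refine ⟨n₀, fun n hn => ?_⟩
  linarith [hn₀ n hn, hK (u n) (fun j => hnl n j j)
    (fun j => hGN _ (hd n j) (h2 n j) (hg n j) (hnl n j j))]

/-- If a bounded sequence of nonzero elements of `H = Σ^m` satisfies
`Σ_j K^Q(u_j^n) → 0`, then `K_{α,β}(u^n) > 0` for all large `n`. -/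
theorem stmt_8 (N m : ℕ) (hN : 2 ≤ N) (p α β : ℝ)
    (hp : 1 + 2/(N:ℝ) < p) (hpc : 3 ≤ N → p < (N:ℝ)/((N:ℝ) - 2))
    (hc1 : 0 < 2*α + ((N:ℝ) - 2)*β) (hc2 : 0 ≤ 2*α + (N:ℝ)*β)
    (hc3 : 0 ≤ 2*α + ((N:ℝ) + 2)*β)
    (a : Fin m → Fin m → ℝ) (ha : ∀ j k, 0 < a j k) (hsym : ∀ j k, a j k = a k j)
    (u : ℕ → Fin m → EuclideanSpace ℝ (Fin N) → ℂ)
    (hd : ∀ n j, Differentiable ℝ (u n j))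
    (h2 : ∀ n j, Integrable (fun x => ‖u n j x‖^2))
    (hx : ∀ n j, Integrable (fun x => ‖x‖^2 * ‖u n j x‖^2))
    (hg : ∀ n j, Integrable (fun x => ‖fderiv ℝ (u n j) x‖^2))
    (hnl : ∀ n j k, Integrable (fun x => (‖u n j x‖ * ‖u n k x‖) ^ p))
    (hnz : ∀ n, u n ≠ 0)
    (hbdd : ∃ B : ℝ, ∀ n, ∑ j, ((∫ x, ‖u n j x‖^2) + (∫ x, ‖x‖^2 * ‖u n j x‖^2)
        + (∫ x, ‖fderiv ℝ (u n j) x‖^2)) ≤ B)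
    (hKQ : Tendsto (fun n => ∑ j, KQfun N α β (u n j)) atTop (nhds 0)) :
    ∃ n₀, ∀ n ≥ n₀, 0 < Kfun N m p α β a (u n) :=
  stmt_8_general N m hN p α β hp hpc hc1 hc3 a ha u hd h2 hg hnl hnz hKQ
end
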